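/- Consider the Lie bracket relations on a 3-dimensional space spanned by ξ, E1, E2: [E1,E2] = p1·E1 + p2·E2 + 2u·ξ, [ξ,E1] = a·E1 + b·E2, [ξ,E2] = c·E1 + d·E2, where p1,p2,u,a,b,c,d are real constants. The Jacobi identity holds for this bracket if and only if u·(a+d) = 0 and (A − (a+d)I)·p = 0, where A is the 2×2 matrix with rows (a, c) and (b, d) acting on the column vector p = (p1, p2). -/

import Mathlib

/-!
The Jacobiator of a bilinear antisymmetric bracket is an alternating trilinear form, so on `ℝ³`
it is the determinant times its value on the basis `ξ, E₁, E₂`. That value has `ξ`-component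
`-2u(a + d)` and `(E₁, E₂)`-components `(A - (a + d)I)p`.
-/

open Matrix

def jacobiator {V : Type*} [Add V] (br : V → V → V) (x y z : V) : V :=
  br x (br y z) + br y (br z x) + br z (br x y)

/-- The bracket with `ξ, E₁, E₂` the coordinates `0, 1, 2` of `ℝ³`. -/
def bracket (p1 p2 u a b c d : ℝ) (x y : Fin 3 → ℝ) : Fin 3 → ℝ :=
  (x 1 * y 2 - x 2 * y 1) • ![2 * u, p1, p2] +
  (x 0 * y 1 - x 1 * y 0) • ![0, a, b] +
  (x 0 * y 2 - x 2 * y 0) • ![0, c, d]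

section

variable (p1 p2 u a b c d : ℝ)

theorem jacobiator_bracket_basis :
    jacobiator (bracket p1 p2 u a b c d) (Pi.single 0 1) (Pi.single 1 1) (Pi.single 2 1) =
      ![-2 * (u * (a + d)), (a - (a + d)) * p1 + c * p2, b * p1 + (d - (a + d)) * p2] := by
  ext i
  fin_cases i <;> simp [jacobiator, bracket] <;> ring

theorem jacobiator_bracket (x y z : Fin 3 → ℝ) :
    jacobiator (bracket p1 p2 u a b c d) x y z =
      (Matrix.of ![x, y, z]).det •
        jacobiator (bracket p1 p2 u a b c d) (Pi.single 0 1) (Pi.single 1 1) (Pi.single 2 1) := by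
  rw [jacobiator_bracket_basis, det_fin_three]
  ext i
  fin_cases i <;> simp [jacobiator, bracket] <;> ring

theorem jacobiator_bracket_eq_zero_iff :
    (∀ x y z, jacobiator (bracket p1 p2 u a b c d) x y z = 0) ↔
      jacobiator (bracket p1 p2 u a b c d) (Pi.single 0 1) (Pi.single 1 1) (Pi.single 2 1) = 0 :=
  ⟨fun h => h _ _ _, fun h x y z => by rw [jacobiator_bracket, h, smul_zero]⟩

end

theorem jacobi_iff_conditions (p1 p2 u a b c d : ℝ)
    (br : (Fin 3 → ℝ) → (Fin 3 → ℝ) → (Fin 3 → ℝ))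
    (hbr : ∀ x y, br x y =
      (x 1 * y 2 - x 2 * y 1) • ![2 * u, p1, p2] +
      (x 0 * y 1 - x 1 * y 0) • ![0, a, b] +
      (x 0 * y 2 - x 2 * y 0) • ![0, c, d]) :
    (∀ x y z, br x (br y z) + br y (br z x) + br z (br x y) = 0) ↔
      (u * (a + d) = 0 ∧
       (a - (a + d)) * p1 + c * p2 = 0 ∧
       b * p1 + (d - (a + d)) * p2 = 0) := by
  obtain rfl : br = bracket p1 p2 u a b c d := funext₂ hbr
  refine (jacobiator_bracket_eq_zero_iff p1 p2 u a b c d).trans ?_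
  rw [jacobiator_bracket_basis]
  simp [cons_eq_zero_iff]
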